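/- arXiv:2508.14528 — 3 statements merged into one kernel-verified Lean document; each statement's English description precedes it below -/
import Mathlib

section
/- With L_nice, m_nice, r_nice as defined from the typed instance, the inequality ⌈L_nice/T⌉ ≥ m_nice holds (ceilings of real numbers, taken in ℕ). (This is the strengthened statement proved inside Lemma 2.) -/
open Finset

variable {ι : Type*} [DecidableEq ι]

/-- The set of classes of a given type (types ①–⑧ are indexed by `Fin 8`,
with `0 ↔ ①`, `1 ↔ ②`, `2 ↔ ③`, `3 ↔ ④`, `4 ↔ ⑤`, `5 ↔ ⑥`, `6 ↔ ⑦`, `7 ↔ ⑧`). -/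
def typeSet (C : Finset ι) (typ : ι → Fin 8) (k : Fin 8) : Finset ι :=
  C.filter fun i => typ i = k

/-- `α'_i = ⌊P_i/(T - s_i)⌋` (floor of a real, taken in ℕ). -/
noncomputable def alpha' (T : ℝ) (s P : ι → ℝ) (i : ι) : ℕ :=
  ⌊P i / (T - s i)⌋₊

/-- `α_i = ⌈P_i/(T - s_i)⌉` (ceiling of a real, taken in ℕ). -/
noncomputable def alphaCeil (T : ℝ) (s P : ι → ℝ) (i : ι) : ℕ :=
  ⌈P i / (T - s i)⌉₊

/-- The obligatory load `L_nice` of a nice instance. -/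
noncomputable def Lnice (T : ℝ) (C : Finset ι) (s P : ι → ℝ) (typ : ι → Fin 8) : ℝ :=
  (∑ i ∈ typeSet C typ 0 ∪ typeSet C typ 1, (alpha' T s P i : ℝ) * s i)
    + (∑ i ∈ typeSet C typ 2, 2 * s i)
    + (∑ i ∈ typeSet C typ 3 ∪ typeSet C typ 4 ∪ typeSet C typ 5 ∪ typeSet C typ 6
        ∪ typeSet C typ 7, s i)
    + ∑ i ∈ C, P i

/-- The residual load `r_nice`. -/
noncomputable def rnice (C : Finset ι) (s P : ι → ℝ) (typ : ι → Fin 8)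
    (R3 R5 R6 : Finset ι) : ℝ :=
  (∑ i ∈ R3, (2 * s i + P i))
    + ∑ i ∈ R5 ∪ R6 ∪ typeSet C typ 6 ∪ typeSet C typ 7, (s i + P i)

/-- The machine lower bound `m_nice`. -/
noncomputable def mnice (T : ℝ) (C : Finset ι) (s P : ι → ℝ) (typ : ι → Fin 8)
    (R3 R5 R6 : Finset ι) : ℕ :=
  (∑ i ∈ typeSet C typ 0 ∪ typeSet C typ 1, alpha' T s P i)
    + 3 * ((typeSet C typ 2).card / 2)
    + (typeSet C typ 3).card
    + (typeSet C typ 4).card / 2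
    + (typeSet C typ 5).card / 3
    + ⌈rnice C s P typ R3 R5 R6 / T⌉₊

/-!
Split `L_nice` into per-class loads: `α' s + P` for types ① and ②, `2 s + P` for type ③ and
`s + P` otherwise. A class of type ① or ② has load at least `α' T`, because `α' (T - s) ≤ P`;
one of type ③ has load at least `3T/2`, one of type ④ at least `T`, and those of types ⑤ and ⑥
more than `T/2` and `T/3`. Pairing classes of types ③ and ⑤ and grouping those of type ⑥ in
triples, the leftover load is exactly `r_nice`, so `L_nice ≥ N T + r_nice` where
`m_nice = N + ⌈r_nice / T⌉`; as `N` is an integer, `⌈L_nice / T⌉ ≥ m_nice`.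
-/

theorem alpha'_mul_le {α : Type*} {T : ℝ} {s P : α → ℝ} {i : α} (hsT : s i < T) (hP : 0 ≤ P i) :
    (alpha' T s P i : ℝ) * T ≤ alpha' T s P i * s i + P i := by
  have hTs : 0 < T - s i := sub_pos.2 hsT
  have : (alpha' T s P i : ℝ) * (T - s i) ≤ P i :=
    (le_div_iff₀ hTs).1 (Nat.floor_le (div_nonneg hP hTs.le))
  linarith

theorem div_mul_add_sum_le_sum_of_card_eq_mod {α : Type*} {S R : Finset α} {f : α → ℝ} {b : ℝ}
    {k : ℕ} (hRS : R ⊆ S) (hR : #R = #S % k) (hf : ∀ i ∈ S, b ≤ f i) :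
    ((#S / k : ℕ) : ℝ) * (k * b) + ∑ i ∈ R, f i ≤ ∑ i ∈ S, f i := by
  classical
  have hcard : #(S \ R) = k * (#S / k) := by
    have := Nat.div_add_mod #S k
    rw [card_sdiff_of_subset hRS]
    omega
  have hsum := card_nsmul_le_sum (S \ R) f b fun i hi => hf i (mem_sdiff.1 hi).1
  rw [hcard, nsmul_eq_mul] at hsum
  push_cast at hsum
  rw [← sum_sdiff hRS]
  linarith

theorem add_ceil_div_le_ceil_div {N : ℕ} {T r L : ℝ} (hT : 0 < T) (hr : 0 ≤ r)
    (h : N * T + r ≤ L) : N + ⌈r / T⌉₊ ≤ ⌈L / T⌉₊ := by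
  rw [add_comm, ← Nat.ceil_add_natCast (div_nonneg hr hT.le)]
  refine Nat.ceil_le_ceil ?_
  rw [div_add' _ _ _ hT.ne', div_le_div_iff_of_pos_right hT]
  linarith

theorem Lnice_eq_sum_typeSet (T : ℝ) (C : Finset ι) (s P : ι → ℝ) (typ : ι → Fin 8) :
    Lnice T C s P typ =
      (∑ i ∈ typeSet C typ 0, ((alpha' T s P i : ℝ) * s i + P i))
      + (∑ i ∈ typeSet C typ 1, ((alpha' T s P i : ℝ) * s i + P i))
      + (∑ i ∈ typeSet C typ 2, (2 * s i + P i))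
      + (∑ i ∈ typeSet C typ 3, (s i + P i))
      + (∑ i ∈ typeSet C typ 4, (s i + P i))
      + (∑ i ∈ typeSet C typ 5, (s i + P i))
      + (∑ i ∈ typeSet C typ 6, (s i + P i))
      + (∑ i ∈ typeSet C typ 7, (s i + P i)) := by
  simp only [Lnice, typeSet, ← filter_or, sum_filter, ← sum_add_distrib]
  refine sum_congr rfl fun i _ => ?_
  generalize typ i = k
  fin_cases k <;> simp

theorem rnice_eq_sum {C : Finset ι} {s P : ι → ℝ} {typ : ι → Fin 8} {R3 R5 R6 : Finset ι}
    (hR5 : R5 ⊆ typeSet C typ 4) (hR6 : R6 ⊆ typeSet C typ 5) :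
    rnice C s P typ R3 R5 R6 =
      (∑ i ∈ R3, (2 * s i + P i)) + (∑ i ∈ R5, (s i + P i)) + (∑ i ∈ R6, (s i + P i))
      + (∑ i ∈ typeSet C typ 6, (s i + P i)) + ∑ i ∈ typeSet C typ 7, (s i + P i) := by
  have hR5 : ∀ i ∈ R5, typ i = 4 := fun i hi => (mem_filter.1 (hR5 hi)).2
  have hR6 : ∀ i ∈ R6, typ i = 5 := fun i hi => (mem_filter.1 (hR6 hi)).2
  rw [rnice, sum_union, sum_union, sum_union]
  · ring
  all_goals grind [disjoint_left, typeSet]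

theorem rnice_nonneg {C : Finset ι} {s P : ι → ℝ} {typ : ι → Fin 8} {R3 R5 R6 : Finset ι}
    (hs : ∀ i ∈ C, 0 ≤ s i) (hP : ∀ i ∈ C, 0 ≤ P i)
    (hR3 : R3 ⊆ C) (hR5 : R5 ⊆ C) (hR6 : R6 ⊆ C) : 0 ≤ rnice C s P typ R3 R5 R6 := by
  have hsub : R5 ∪ R6 ∪ typeSet C typ 6 ∪ typeSet C typ 7 ⊆ C := by
    simp only [union_subset_iff, typeSet, filter_subset, and_true]
    exact ⟨hR5, hR6⟩
  refine add_nonneg (sum_nonneg fun i hi => ?_) (sum_nonneg fun i hi => ?_)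
  · linarith [hs i (hR3 hi), hP i (hR3 hi)]
  · linarith [hs i (hsub hi), hP i (hsub hi)]

theorem mul_add_rnice_le_Lnice {T : ℝ} {C : Finset ι} {s P : ι → ℝ} {typ : ι → Fin 8}
    {R3 R5 R6 : Finset ι} (hs : ∀ i ∈ C, s i < T) (hP : ∀ i ∈ C, 0 ≤ P i)
    (h3 : ∀ i ∈ typeSet C typ 2, 3 * T / 2 ≤ 2 * s i + P i)
    (h4 : ∀ i ∈ typeSet C typ 3, T ≤ s i + P i)
    (h5 : ∀ i ∈ typeSet C typ 4, T / 2 ≤ s i + P i)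
    (h6 : ∀ i ∈ typeSet C typ 5, T / 3 ≤ s i + P i)
    (hR3 : R3 ⊆ typeSet C typ 2) (hR3card : #R3 = #(typeSet C typ 2) % 2)
    (hR5 : R5 ⊆ typeSet C typ 4) (hR5card : #R5 = #(typeSet C typ 4) % 2)
    (hR6 : R6 ⊆ typeSet C typ 5) (hR6card : #R6 = #(typeSet C typ 5) % 3) :
    (((∑ i ∈ typeSet C typ 0 ∪ typeSet C typ 1, alpha' T s P i) + 3 * (#(typeSet C typ 2) / 2)
      + #(typeSet C typ 3) + #(typeSet C typ 4) / 2 + #(typeSet C typ 5) / 3 : ℕ) : ℝ) * T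
      + rnice C s P typ R3 R5 R6 ≤ Lnice T C s P typ := by
  have hα (k : Fin 8) : (∑ i ∈ typeSet C typ k, (alpha' T s P i : ℝ)) * T ≤
      ∑ i ∈ typeSet C typ k, ((alpha' T s P i : ℝ) * s i + P i) := by
    rw [sum_mul]
    exact sum_le_sum fun i hi =>
      alpha'_mul_le (hs i (mem_filter.1 hi).1) (hP i (mem_filter.1 hi).1)
  have h4' : (#(typeSet C typ 3) : ℝ) * T ≤ ∑ i ∈ typeSet C typ 3, (s i + P i) := by
    simpa using card_nsmul_le_sum _ _ _ h4
  have h3' := div_mul_add_sum_le_sum_of_card_eq_mod hR3 hR3card h3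
  have h5' := div_mul_add_sum_le_sum_of_card_eq_mod hR5 hR5card h5
  have h6' := div_mul_add_sum_le_sum_of_card_eq_mod hR6 hR6card h6
  have h01 : Disjoint (typeSet C typ 0) (typeSet C typ 1) :=
    disjoint_filter.2 fun _ _ h => h ▸ by decide
  rw [Lnice_eq_sum_typeSet, rnice_eq_sum hR5 hR6]
  push_cast at h3' h5' h6' ⊢
  rw [sum_union h01]
  linarith [hα 0, hα 1]

theorem stmt_1_general (T : ℝ) (hT : 0 < T)
    (C : Finset ι) (s P : ι → ℝ) (typ : ι → Fin 8)
    (hs : ∀ i ∈ C, 0 ≤ s i ∧ s i < T) (hP : ∀ i ∈ C, 0 < P i)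
    (h3 : ∀ i ∈ C, typ i = 2 →
      T / 3 ≤ s i ∧ s i < 2 * T / 3 ∧ 4 * T / 3 < s i + P i ∧ s i + P i < 2 * T - s i)
    (h4 : ∀ i ∈ C, typ i = 3 →
      T / 3 ≤ s i ∧ s i < 2 * T / 3 ∧ T ≤ s i + P i ∧ s i + P i ≤ 4 * T / 3)
    (h5 : ∀ i ∈ C, typ i = 4 →
      T / 3 ≤ s i ∧ s i < 2 * T / 3 ∧ T / 2 < s i + P i ∧ s i + P i ≤ 2 * T / 3)
    (h6 : ∀ i ∈ C, typ i = 5 →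
      T / 3 ≤ s i ∧ s i < 2 * T / 3 ∧ T / 3 < s i + P i ∧ s i + P i ≤ 4 * T / 9)
    (R3 R5 R6 : Finset ι)
    (hR3 : R3 ⊆ typeSet C typ 2)
    (hR3card : R3.card = (typeSet C typ 2).card - 2 * ((typeSet C typ 2).card / 2))
    (hR5 : R5 ⊆ typeSet C typ 4)
    (hR5card : R5.card = (typeSet C typ 4).card - 2 * ((typeSet C typ 4).card / 2))
    (hR6 : R6 ⊆ typeSet C typ 5)
    (hR6card : R6.card = (typeSet C typ 5).card - 3 * ((typeSet C typ 5).card / 3))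
    : ⌈Lnice T C s P typ / T⌉₊ ≥ mnice T C s P typ R3 R5 R6 := by
  have sub {R : Finset ι} {k : Fin 8} (h : R ⊆ typeSet C typ k) : R ⊆ C :=
    h.trans (filter_subset _ _)
  have hr := rnice_nonneg (typ := typ) (fun i hi => (hs i hi).1) (fun i hi => (hP i hi).le)
    (sub hR3) (sub hR5) (sub hR6)
  refine add_ceil_div_le_ceil_div hT hr (mul_add_rnice_le_Lnice (fun i hi => (hs i hi).2)
    (fun i hi => (hP i hi).le) ?_ ?_ ?_ ?_ hR3 (by omega) hR5 (by omega) hR6 (by omega))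
  all_goals intro i hi; obtain ⟨hiC, hk⟩ := mem_filter.1 hi
  · linarith [(h3 i hiC hk).1, (h3 i hiC hk).2.2.1]
  · exact (h4 i hiC hk).2.2.1
  · exact (h5 i hiC hk).2.2.1.le
  · exact (h6 i hiC hk).2.2.1.le

/-- the strengthened claim proved inside Lemma 2:
`⌈L_nice/T⌉ ≥ m_nice`. -/
theorem stmt_1 (T : ℝ) (hT : 0 < T) (m : ℕ) (hm : 1 ≤ m)
    (C : Finset ι) (s P : ι → ℝ) (typ : ι → Fin 8)
    (hs : ∀ i ∈ C, 0 ≤ s i ∧ s i < T) (hP : ∀ i ∈ C, 0 < P i)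
    (h1 : ∀ i ∈ C, typ i = 0 →
      2 * T / 3 ≤ s i ∧ T ≤ s i + P i ∧ s i + P i ≤ (m : ℝ) * T)
    (h2 : ∀ i ∈ C, typ i = 1 →
      T / 3 ≤ s i ∧ s i < 2 * T / 3 ∧ 2 * T - s i ≤ s i + P i ∧ s i + P i ≤ (m : ℝ) * T)
    (h3 : ∀ i ∈ C, typ i = 2 →
      T / 3 ≤ s i ∧ s i < 2 * T / 3 ∧ 4 * T / 3 < s i + P i ∧ s i + P i < 2 * T - s i)
    (h4 : ∀ i ∈ C, typ i = 3 →
      T / 3 ≤ s i ∧ s i < 2 * T / 3 ∧ T ≤ s i + P i ∧ s i + P i ≤ 4 * T / 3)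
    (h5 : ∀ i ∈ C, typ i = 4 →
      T / 3 ≤ s i ∧ s i < 2 * T / 3 ∧ T / 2 < s i + P i ∧ s i + P i ≤ 2 * T / 3)
    (h6 : ∀ i ∈ C, typ i = 5 →
      T / 3 ≤ s i ∧ s i < 2 * T / 3 ∧ T / 3 < s i + P i ∧ s i + P i ≤ 4 * T / 9)
    (h7 : ∀ i ∈ C, typ i = 6 → 0 ≤ s i ∧ s i < T / 3)
    (h8 : ∀ i ∈ C, typ i = 7 →
      T / 3 ≤ s i ∧ s i < 2 * T / 3 ∧ 4 * T / 9 < s i + P i ∧ s i + P i ≤ T / 2)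
    (R3 R5 R6 : Finset ι)
    (hR3 : R3 ⊆ typeSet C typ 2)
    (hR3card : R3.card = (typeSet C typ 2).card - 2 * ((typeSet C typ 2).card / 2))
    (hR5 : R5 ⊆ typeSet C typ 4)
    (hR5card : R5.card = (typeSet C typ 4).card - 2 * ((typeSet C typ 4).card / 2))
    (hR6 : R6 ⊆ typeSet C typ 5)
    (hR6card : R6.card = (typeSet C typ 5).card - 3 * ((typeSet C typ 5).card / 3))
    : ⌈Lnice T C s P typ / T⌉₊ ≥ mnice T C s P typ R3 R5 R6 :=
  stmt_1_general T hT C s P typ hs hP h3 h4 h5 h6 R3 R5 R6 hR3 hR3card hR5 hR5card hR6 hR6card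
end

section
/- If L_nice ≤ m·T, then m_nice ≤ m. (This is Lemma 2 as stated in the paper.) -/
set_option maxHeartbeats 1000000


open Finset

variable {ι : Type*} [DecidableEq ι]

lemma typeSet_mem {C : Finset ι} {typ : ι → Fin 8} {k : Fin 8} {i : ι} :
    i ∈ typeSet C typ k ↔ i ∈ C ∧ typ i = k := by
  simp [typeSet]

lemma typeSet_disjoint (C : Finset ι) (typ : ι → Fin 8) {a b : Fin 8} (h : a ≠ b) :
    Disjoint (typeSet C typ a) (typeSet C typ b) := by
  simp only [Finset.disjoint_left, typeSet_mem]
  rintro x ⟨_, ha⟩ ⟨_, hb⟩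
  exact h (ha.symm.trans hb)

/-- Lemma 2: if `L_nice ≤ m·T` then `m_nice ≤ m`. -/
theorem stmt_2 (T : ℝ) (hT : 0 < T) (m : ℕ) (hm : 1 ≤ m)
    (C : Finset ι) (s P : ι → ℝ) (typ : ι → Fin 8)
    (hs : ∀ i ∈ C, 0 ≤ s i ∧ s i < T) (hP : ∀ i ∈ C, 0 < P i)
    (h1 : ∀ i ∈ C, typ i = 0 →
      2 * T / 3 ≤ s i ∧ T ≤ s i + P i ∧ s i + P i ≤ (m : ℝ) * T)
    (h2 : ∀ i ∈ C, typ i = 1 →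
      T / 3 ≤ s i ∧ s i < 2 * T / 3 ∧ 2 * T - s i ≤ s i + P i ∧ s i + P i ≤ (m : ℝ) * T)
    (h3 : ∀ i ∈ C, typ i = 2 →
      T / 3 ≤ s i ∧ s i < 2 * T / 3 ∧ 4 * T / 3 < s i + P i ∧ s i + P i < 2 * T - s i)
    (h4 : ∀ i ∈ C, typ i = 3 →
      T / 3 ≤ s i ∧ s i < 2 * T / 3 ∧ T ≤ s i + P i ∧ s i + P i ≤ 4 * T / 3)
    (h5 : ∀ i ∈ C, typ i = 4 →
      T / 3 ≤ s i ∧ s i < 2 * T / 3 ∧ T / 2 < s i + P i ∧ s i + P i ≤ 2 * T / 3)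
    (h6 : ∀ i ∈ C, typ i = 5 →
      T / 3 ≤ s i ∧ s i < 2 * T / 3 ∧ T / 3 < s i + P i ∧ s i + P i ≤ 4 * T / 9)
    (h7 : ∀ i ∈ C, typ i = 6 → 0 ≤ s i ∧ s i < T / 3)
    (h8 : ∀ i ∈ C, typ i = 7 →
      T / 3 ≤ s i ∧ s i < 2 * T / 3 ∧ 4 * T / 9 < s i + P i ∧ s i + P i ≤ T / 2)
    (R3 R5 R6 : Finset ι)
    (hR3 : R3 ⊆ typeSet C typ 2)
    (hR3card : R3.card = (typeSet C typ 2).card - 2 * ((typeSet C typ 2).card / 2))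
    (hR5 : R5 ⊆ typeSet C typ 4)
    (hR5card : R5.card = (typeSet C typ 4).card - 2 * ((typeSet C typ 4).card / 2))
    (hR6 : R6 ⊆ typeSet C typ 5)
    (hR6card : R6.card = (typeSet C typ 5).card - 3 * ((typeSet C typ 5).card / 3))
    (hL : Lnice T C s P typ ≤ (m : ℝ) * T) :
    mnice T C s P typ R3 R5 R6 ≤ m := by
  classical
  -- abbreviations
  have hdisj : ∀ a b : Fin 8, a ≠ b → Disjoint (typeSet C typ a) (typeSet C typ b) :=
    fun a b h => typeSet_disjoint C typ h
  have hsubC : ∀ k : Fin 8, typeSet C typ k ⊆ C := fun k i hi => (typeSet_mem.mp hi).1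
  -- split ∑ P over C into type sums
  have hPsplit : (∑ i ∈ typeSet C typ 0, P i) + (∑ i ∈ typeSet C typ 1, P i)
      + (∑ i ∈ typeSet C typ 2, P i) + (∑ i ∈ typeSet C typ 3, P i)
      + (∑ i ∈ typeSet C typ 4, P i) + (∑ i ∈ typeSet C typ 5, P i)
      + (∑ i ∈ typeSet C typ 6, P i) + (∑ i ∈ typeSet C typ 7, P i)
      = ∑ i ∈ C, P i := by
    have := Finset.sum_fiberwise_of_maps_to (t := (Finset.univ : Finset (Fin 8)))
      (fun i (_ : i ∈ C) => Finset.mem_univ (typ i)) P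
    rw [Fin.sum_univ_eight] at this
    simpa [typeSet] using this
  -- split union sums
  have hU01a : ∑ i ∈ typeSet C typ 0 ∪ typeSet C typ 1, ((alpha' T s P i : ℝ) * s i)
      = (∑ i ∈ typeSet C typ 0, (alpha' T s P i : ℝ) * s i)
        + ∑ i ∈ typeSet C typ 1, (alpha' T s P i : ℝ) * s i :=
    Finset.sum_union (hdisj 0 1 (by decide))
  have hU01P : ∑ i ∈ typeSet C typ 0 ∪ typeSet C typ 1, P i
      = (∑ i ∈ typeSet C typ 0, P i) + ∑ i ∈ typeSet C typ 1, P i :=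
    Finset.sum_union (hdisj 0 1 (by decide))
  have hU01n : ∑ i ∈ typeSet C typ 0 ∪ typeSet C typ 1, alpha' T s P i
      = (∑ i ∈ typeSet C typ 0, alpha' T s P i) + ∑ i ∈ typeSet C typ 1, alpha' T s P i :=
    Finset.sum_union (hdisj 0 1 (by decide))
  have hU34567 : ∑ i ∈ typeSet C typ 3 ∪ typeSet C typ 4 ∪ typeSet C typ 5 ∪ typeSet C typ 6
        ∪ typeSet C typ 7, s i
      = (∑ i ∈ typeSet C typ 3, s i) + (∑ i ∈ typeSet C typ 4, s i)
        + (∑ i ∈ typeSet C typ 5, s i) + (∑ i ∈ typeSet C typ 6, s i)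
        + ∑ i ∈ typeSet C typ 7, s i := by
    rw [Finset.sum_union, Finset.sum_union, Finset.sum_union, Finset.sum_union]
    · exact hdisj 3 4 (by decide)
    · exact Finset.disjoint_union_left.mpr ⟨hdisj 3 5 (by decide), hdisj 4 5 (by decide)⟩
    · exact Finset.disjoint_union_left.mpr ⟨Finset.disjoint_union_left.mpr
        ⟨hdisj 3 6 (by decide), hdisj 4 6 (by decide)⟩, hdisj 5 6 (by decide)⟩
    · exact Finset.disjoint_union_left.mpr ⟨Finset.disjoint_union_left.mpr
        ⟨Finset.disjoint_union_left.mpr ⟨hdisj 3 7 (by decide), hdisj 4 7 (by decide)⟩,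
          hdisj 5 7 (by decide)⟩, hdisj 6 7 (by decide)⟩
  -- split r
  have hrsplit : rnice C s P typ R3 R5 R6
      = (∑ i ∈ R3, (2 * s i + P i)) + (∑ i ∈ R5, (s i + P i)) + (∑ i ∈ R6, (s i + P i))
        + (∑ i ∈ typeSet C typ 6, (s i + P i)) + ∑ i ∈ typeSet C typ 7, (s i + P i) := by
    rw [rnice, Finset.sum_union, Finset.sum_union, Finset.sum_union]
    · ring
    · exact ((hdisj 4 5 (by decide)).mono hR5 hR6)
    · exact Finset.disjoint_union_left.mpr
        ⟨(hdisj 4 6 (by decide)).mono_left hR5, (hdisj 5 6 (by decide)).mono_left hR6⟩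
    · exact Finset.disjoint_union_left.mpr ⟨Finset.disjoint_union_left.mpr
        ⟨(hdisj 4 7 (by decide)).mono_left hR5, (hdisj 5 7 (by decide)).mono_left hR6⟩,
          hdisj 6 7 (by decide)⟩
  -- per-element floor bound
  have key : ∀ i ∈ C, (alpha' T s P i : ℝ) * T ≤ (alpha' T s P i : ℝ) * s i + P i := by
    intro i hi
    have hts : 0 < T - s i := by linarith [(hs i hi).2]
    have h1 : (alpha' T s P i : ℝ) ≤ P i / (T - s i) :=
      Nat.floor_le (div_nonneg (hP i hi).le hts.le)
    have h2 : (alpha' T s P i : ℝ) * (T - s i) ≤ P i := (le_div_iff₀ hts).mp h1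
    nlinarith
  -- B01
  have B01 : (∑ i ∈ typeSet C typ 0 ∪ typeSet C typ 1, (alpha' T s P i : ℝ)) * T
      ≤ (∑ i ∈ typeSet C typ 0 ∪ typeSet C typ 1, (alpha' T s P i : ℝ) * s i)
        + ∑ i ∈ typeSet C typ 0 ∪ typeSet C typ 1, P i := by
    rw [Finset.sum_mul, ← Finset.sum_add_distrib]
    apply Finset.sum_le_sum
    intro i hi
    rcases Finset.mem_union.mp hi with h | h
    · exact key i (hsubC 0 h)
    · exact key i (hsubC 1 h)
  -- B2
  have hc2 : R3.card ≤ (typeSet C typ 2).card := Finset.card_le_card hR3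
  have hsd2 : ((typeSet C typ 2) \ R3).card = 2 * ((typeSet C typ 2).card / 2) := by
    rw [Finset.card_sdiff_of_subset hR3]; omega
  have B2 : 3 * (((typeSet C typ 2).card / 2 : ℕ) : ℝ) * T + (∑ i ∈ R3, (2 * s i + P i))
      ≤ (∑ i ∈ typeSet C typ 2, 2 * s i) + ∑ i ∈ typeSet C typ 2, P i := by
    have hb : ∀ i ∈ (typeSet C typ 2) \ R3, (3 : ℝ) / 2 * T ≤ 2 * s i + P i := by
      intro i hi
      have hi2 := (Finset.mem_sdiff.mp hi).1
      obtain ⟨hiC, hk⟩ := typeSet_mem.mp hi2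
      obtain ⟨ha, -, hc, -⟩ := h3 i hiC hk
      linarith
    have hsum := Finset.card_nsmul_le_sum _ _ _ hb
    rw [nsmul_eq_mul, hsd2] at hsum
    have hsd := Finset.sum_sdiff (f := fun i => 2 * s i + P i) hR3
    rw [← Finset.sum_add_distrib] at *
    push_cast at hsum
    calc 3 * (((typeSet C typ 2).card / 2 : ℕ) : ℝ) * T + ∑ i ∈ R3, (2 * s i + P i)
        ≤ (∑ i ∈ typeSet C typ 2 \ R3, (2 * s i + P i)) + ∑ i ∈ R3, (2 * s i + P i) := by
          linarith
      _ = ∑ i ∈ typeSet C typ 2, (2 * s i + P i) := hsd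
      _ = _ := by rw [Finset.sum_add_distrib]
  -- B3
  have B3 : (((typeSet C typ 3).card : ℕ) : ℝ) * T
      ≤ (∑ i ∈ typeSet C typ 3, s i) + ∑ i ∈ typeSet C typ 3, P i := by
    have hb : ∀ i ∈ typeSet C typ 3, T ≤ s i + P i := by
      intro i hi
      obtain ⟨hiC, hk⟩ := typeSet_mem.mp hi
      exact (h4 i hiC hk).2.2.1
    have hsum := Finset.card_nsmul_le_sum _ _ _ hb
    rw [nsmul_eq_mul] at hsum
    rw [← Finset.sum_add_distrib]
    exact hsum
  -- B4
  have hc4 : R5.card ≤ (typeSet C typ 4).card := Finset.card_le_card hR5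
  have hsd4 : ((typeSet C typ 4) \ R5).card = 2 * ((typeSet C typ 4).card / 2) := by
    rw [Finset.card_sdiff_of_subset hR5]; omega
  have B4 : (((typeSet C typ 4).card / 2 : ℕ) : ℝ) * T + (∑ i ∈ R5, (s i + P i))
      ≤ (∑ i ∈ typeSet C typ 4, s i) + ∑ i ∈ typeSet C typ 4, P i := by
    have hb : ∀ i ∈ (typeSet C typ 4) \ R5, T / 2 ≤ s i + P i := by
      intro i hi
      obtain ⟨hiC, hk⟩ := typeSet_mem.mp (Finset.mem_sdiff.mp hi).1
      linarith [(h5 i hiC hk).2.2.1]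
    have hsum := Finset.card_nsmul_le_sum _ _ _ hb
    rw [nsmul_eq_mul, hsd4] at hsum
    have hsd := Finset.sum_sdiff (f := fun i => s i + P i) hR5
    push_cast at hsum
    have := hsd ▸ (by linarith :
      (((typeSet C typ 4).card / 2 : ℕ) : ℝ) * T + (∑ i ∈ R5, (s i + P i))
        ≤ (∑ i ∈ typeSet C typ 4 \ R5, (s i + P i)) + ∑ i ∈ R5, (s i + P i))
    rw [← Finset.sum_add_distrib]
    exact this
  -- B5
  have hc5 : R6.card ≤ (typeSet C typ 5).card := Finset.card_le_card hR6
  have hsd5 : ((typeSet C typ 5) \ R6).card = 3 * ((typeSet C typ 5).card / 3) := by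
    rw [Finset.card_sdiff_of_subset hR6]; omega
  have B5 : (((typeSet C typ 5).card / 3 : ℕ) : ℝ) * T + (∑ i ∈ R6, (s i + P i))
      ≤ (∑ i ∈ typeSet C typ 5, s i) + ∑ i ∈ typeSet C typ 5, P i := by
    have hb : ∀ i ∈ (typeSet C typ 5) \ R6, T / 3 ≤ s i + P i := by
      intro i hi
      obtain ⟨hiC, hk⟩ := typeSet_mem.mp (Finset.mem_sdiff.mp hi).1
      linarith [(h6 i hiC hk).2.2.1]
    have hsum := Finset.card_nsmul_le_sum _ _ _ hb
    rw [nsmul_eq_mul, hsd5] at hsum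
    have hsd := Finset.sum_sdiff (f := fun i => s i + P i) hR6
    push_cast at hsum
    have := hsd ▸ (by linarith :
      (((typeSet C typ 5).card / 3 : ℕ) : ℝ) * T + (∑ i ∈ R6, (s i + P i))
        ≤ (∑ i ∈ typeSet C typ 5 \ R6, (s i + P i)) + ∑ i ∈ R6, (s i + P i))
    rw [← Finset.sum_add_distrib]
    exact this
  -- E6, E7
  have E6 : ∑ i ∈ typeSet C typ 6, (s i + P i)
      = (∑ i ∈ typeSet C typ 6, s i) + ∑ i ∈ typeSet C typ 6, P i :=
    Finset.sum_add_distrib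
  have E7 : ∑ i ∈ typeSet C typ 7, (s i + P i)
      = (∑ i ∈ typeSet C typ 7, s i) + ∑ i ∈ typeSet C typ 7, P i :=
    Finset.sum_add_distrib
  -- abbreviation for A
  set A : ℕ := (∑ i ∈ typeSet C typ 0 ∪ typeSet C typ 1, alpha' T s P i)
    + 3 * ((typeSet C typ 2).card / 2) + (typeSet C typ 3).card
    + (typeSet C typ 4).card / 2 + (typeSet C typ 5).card / 3 with hA
  have hAcast : (A : ℝ) = (∑ i ∈ typeSet C typ 0 ∪ typeSet C typ 1, (alpha' T s P i : ℝ))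
      + 3 * (((typeSet C typ 2).card / 2 : ℕ) : ℝ) + (((typeSet C typ 3).card : ℕ) : ℝ)
      + (((typeSet C typ 4).card / 2 : ℕ) : ℝ) + (((typeSet C typ 5).card / 3 : ℕ) : ℝ) := by
    rw [hA]; push_cast; ring
  -- main inequality
  have main : (A : ℝ) * T + rnice C s P typ R3 R5 R6 ≤ Lnice T C s P typ := by
    rw [hAcast, hrsplit, Lnice, hU34567, ← hPsplit, hU01a]
    rw [hU01P] at B01
    linarith
  -- nonnegativity of r
  have hr0 : 0 ≤ rnice C s P typ R3 R5 R6 := by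
    rw [hrsplit]
    have t1 : 0 ≤ ∑ i ∈ R3, (2 * s i + P i) := Finset.sum_nonneg fun i hi => by
      have hiC := hsubC 2 (hR3 hi)
      linarith [(hs i hiC).1, (hP i hiC).le]
    have t2 : 0 ≤ ∑ i ∈ R5, (s i + P i) := Finset.sum_nonneg fun i hi => by
      have hiC := hsubC 4 (hR5 hi)
      linarith [(hs i hiC).1, (hP i hiC).le]
    have t3 : 0 ≤ ∑ i ∈ R6, (s i + P i) := Finset.sum_nonneg fun i hi => by
      have hiC := hsubC 5 (hR6 hi)
      linarith [(hs i hiC).1, (hP i hiC).le]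
    have t4 : 0 ≤ ∑ i ∈ typeSet C typ 6, (s i + P i) := Finset.sum_nonneg fun i hi => by
      have hiC := hsubC 6 hi
      linarith [(hs i hiC).1, (hP i hiC).le]
    have t5 : 0 ≤ ∑ i ∈ typeSet C typ 7, (s i + P i) := Finset.sum_nonneg fun i hi => by
      have hiC := hsubC 7 hi
      linarith [(hs i hiC).1, (hP i hiC).le]
    linarith
  have hATr : (A : ℝ) * T + rnice C s P typ R3 R5 R6 ≤ (m : ℝ) * T := main.trans hL
  have hAm : A ≤ m := by
    have h1 : (A : ℝ) * T ≤ (m : ℝ) * T := by linarith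
    have h2 : (A : ℝ) ≤ (m : ℝ) := le_of_mul_le_mul_right h1 hT
    exact_mod_cast h2
  have hceil : ⌈rnice C s P typ R3 R5 R6 / T⌉₊ ≤ m - A := by
    rw [Nat.ceil_le, Nat.cast_sub hAm, div_le_iff₀ hT]
    nlinarith
  have hmn : mnice T C s P typ R3 R5 R6 = A + ⌈rnice C s P typ R3 R5 R6 / T⌉₊ := by
    rw [mnice, hA]
  omega
end

section
/- With L_nice as defined from the typed instance, and α_i = ⌈P_i/(T−s_i)⌉, the inequality L_nice ≤ ∑_{all i} (α_i·s_i + P_i) holds. -/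
open Finset

variable {ι : Type*} [DecidableEq ι]

/-!
`L_nice` charges each class `i` for `c_i` setups, with `c_i = α'_i` on types ① and ②, `c_i = 2` on
type ③ and `c_i = 1` otherwise, so it suffices that `c_i ≤ α_i` for every class: `⌊x⌋ ≤ ⌈x⌉`;
on type ③, `s_i + P_i > 4T/3` forces `P_i/(T - s_i) > 1`, hence `α_i ≥ 2`; and `P_i > 0` gives
`α_i ≥ 1`.
-/

noncomputable def niceSetupCount (T : ℝ) (s P : ι → ℝ) (typ : ι → Fin 8) (i : ι) : ℕ :=
  if typ i = 0 ∨ typ i = 1 then alpha' T s P i else if typ i = 2 then 2 else 1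

theorem Lnice_eq_sum (T : ℝ) (C : Finset ι) (s P : ι → ℝ) (typ : ι → Fin 8) :
    Lnice T C s P typ = ∑ i ∈ C, ((niceSetupCount T s P typ i : ℝ) * s i + P i) := by
  simp only [Lnice, typeSet, ← filter_or, sum_filter, ← sum_add_distrib]
  refine sum_congr rfl fun i _ => ?_
  unfold niceSetupCount
  generalize typ i = k
  fin_cases k <;> simp

omit [DecidableEq ι] in
theorem niceSetupCount_le_alphaCeil {T : ℝ} {s P : ι → ℝ} {typ : ι → Fin 8} {i : ι}
    (hsT : s i < T) (hP : 0 < P i) (h3 : typ i = 2 → T - s i < P i) :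
    niceSetupCount T s P typ i ≤ alphaCeil T s P i := by
  have hgap : 0 < T - s i := sub_pos.mpr hsT
  unfold niceSetupCount alphaCeil
  split_ifs with _ h2
  · exact Nat.floor_le_ceil _
  · exact Nat.lt_ceil.mpr (by simpa using (one_lt_div hgap).mpr (h3 h2))
  · exact Nat.one_le_ceil_iff.mpr (div_pos hP hgap)

theorem stmt_6_general (T : ℝ)
    (C : Finset ι) (s P : ι → ℝ) (typ : ι → Fin 8)
    (hs : ∀ i ∈ C, 0 ≤ s i ∧ s i < T) (hP : ∀ i ∈ C, 0 < P i)
    (h3 : ∀ i ∈ C, typ i = 2 →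
      T / 3 ≤ s i ∧ s i < 2 * T / 3 ∧ 4 * T / 3 < s i + P i ∧ s i + P i < 2 * T - s i)
    : Lnice T C s P typ ≤ ∑ i ∈ C, ((alphaCeil T s P i : ℝ) * s i + P i) := by
  rw [Lnice_eq_sum]
  refine sum_le_sum fun i hi => ?_
  obtain ⟨hs0, hsT⟩ := hs i hi
  have hcount : niceSetupCount T s P typ i ≤ alphaCeil T s P i := by
    refine niceSetupCount_le_alphaCeil hsT (hP i hi) fun h => ?_
    linarith [(h3 i hi h).2.2.1]
  gcongr

/-- `L_nice ≤ ∑ i (α_i·s_i + P_i)`. -/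
theorem stmt_6 (T : ℝ) (hT : 0 < T) (m : ℕ) (hm : 1 ≤ m)
    (C : Finset ι) (s P : ι → ℝ) (typ : ι → Fin 8)
    (hs : ∀ i ∈ C, 0 ≤ s i ∧ s i < T) (hP : ∀ i ∈ C, 0 < P i)
    (h1 : ∀ i ∈ C, typ i = 0 →
      2 * T / 3 ≤ s i ∧ T ≤ s i + P i ∧ s i + P i ≤ (m : ℝ) * T)
    (h2 : ∀ i ∈ C, typ i = 1 →
      T / 3 ≤ s i ∧ s i < 2 * T / 3 ∧ 2 * T - s i ≤ s i + P i ∧ s i + P i ≤ (m : ℝ) * T)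
    (h3 : ∀ i ∈ C, typ i = 2 →
      T / 3 ≤ s i ∧ s i < 2 * T / 3 ∧ 4 * T / 3 < s i + P i ∧ s i + P i < 2 * T - s i)
    (h4 : ∀ i ∈ C, typ i = 3 →
      T / 3 ≤ s i ∧ s i < 2 * T / 3 ∧ T ≤ s i + P i ∧ s i + P i ≤ 4 * T / 3)
    (h5 : ∀ i ∈ C, typ i = 4 →
      T / 3 ≤ s i ∧ s i < 2 * T / 3 ∧ T / 2 < s i + P i ∧ s i + P i ≤ 2 * T / 3)
    (h6 : ∀ i ∈ C, typ i = 5 →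
      T / 3 ≤ s i ∧ s i < 2 * T / 3 ∧ T / 3 < s i + P i ∧ s i + P i ≤ 4 * T / 9)
    (h7 : ∀ i ∈ C, typ i = 6 → 0 ≤ s i ∧ s i < T / 3)
    (h8 : ∀ i ∈ C, typ i = 7 →
      T / 3 ≤ s i ∧ s i < 2 * T / 3 ∧ 4 * T / 9 < s i + P i ∧ s i + P i ≤ T / 2)
    : Lnice T C s P typ ≤ ∑ i ∈ C, ((alphaCeil T s P i : ℝ) * s i + P i) :=
  stmt_6_general T C s P typ hs hP h3
end
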